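/- Let K_H and K_V be two continua (nonempty compact connected subsets) in the plane ℝ², such that K_H contains the points (0,0) and (1,0), and K_V contains the points (0,0) and (0,1). Then for every nonzero vector w ∈ ℝ² there exists a closed connected set M_w ⊆ ℝ² which is a union of integer translates of K_H and K_V (that is, M_w = (⋃_{u∈A} (K_H + u)) ∪ (⋃_{u∈B} (K_V + u)) for some subsets A, B ⊆ ℤ²) such that: (1) M_w intersects every straight line orthogonal to w; and (2) M_w is contained between two straight lines r and s, both parallel to w, whose distance from each other is less than 3 + 2·max{diam(K_H), diam(K_V)}. -/

import Mathlib

open Set Metric Bornology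
open scoped RealInnerProductSpace

noncomputable section

/-- The Euclidean plane. -/
abbrev E2 : Type := EuclideanSpace ℝ (Fin 2)

/-- The first standard basis vector `(1,0)`. -/
def e₁ : E2 := EuclideanSpace.single 0 1

/-- The second standard basis vector `(0,1)`. -/
def e₂ : E2 := EuclideanSpace.single 1 1

/-- The point of the plane corresponding to an integer vector. -/
def zvec (m : ℤ × ℤ) : E2 := (m.1 : ℝ) • e₁ + (m.2 : ℝ) • e₂

/-- The translate of a set by a vector. -/
def etrans (S : Set E2) (v : E2) : Set E2 := (fun z => z + v) '' S

/-- The vector `w` rotated by 90 degrees. -/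
def perp (w : E2) : E2 :=
  EuclideanSpace.single 0 (-(w 1)) + EuclideanSpace.single 1 (w 0)

/-!
Let `D = max (diam K_H) (diam K_V)`. For a lattice point `u`, the cross `(K_H + u) ∪ (K_V + u)`
is a continuum lying within distance `D` of `u`; the crosses at grid-adjacent points meet, since
`K_H + u` contains `u + (1,0)` and `K_V + u` contains `u + (0,1)`. Take `M` to be the union of the
crosses at the lattice points within distance `1` of the line `ℝ w`. Because both coordinates of
the unit normal are at most `1` in absolute value, any two such lattice points are joined by a
path of unit grid steps that stays in this strip, so `M` is connected; it is closed as a locally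
finite union of compact sets. The strip contains lattice points arbitrarily far in both
directions of `w`, so by the intermediate value theorem for `z ↦ ⟪z, w⟫` every line orthogonal
to `w` meets `M`. Finally `M` lies within distance `1 + D` of `ℝ w`, and `2 + 2 D < 3 + 2 D`.
-/

open Relation
open SimpleGraph (hasse hasse_adj boxProd_adj)

lemma abs_add_le_or_of_abs_add_mul_add_mul_le {B x α β : ℝ} {m k : ℕ} (hx : |x| ≤ B)
    (hα : |α| ≤ B) (hβ : |β| ≤ B) (hm : m ≠ 0) (h : |x + m * α + k * β| ≤ B) :
    |x + α| ≤ B ∨ (k ≠ 0 ∧ |x + β| ≤ B) := by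
  by_contra! hcon
  obtain ⟨hxα, hxβ⟩ := hcon
  wlog hout : B < x + α generalizing x α β
  · refine this (x := -x) (α := -α) (β := -β) ?_ ?_ ?_ ?_ ?_ ?_ ?_ <;>
      simp only [abs_neg, mul_neg, ← neg_add] <;> first | assumption | skip
    exact (lt_abs.mp hxα).resolve_left hout
  have hα0 : 0 < α := by linarith [(abs_le.mp hx).2]
  -- `x + β < -B` is impossible, as it would force `α - β > 2 B`.
  have hkβ : 0 ≤ k * β := by
    rcases eq_or_ne k 0 with rfl | hk
    · simp
    · have hβ0 : 0 < β := by
        rcases lt_abs.mp (hxβ hk) with h' | h'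
        · linarith [(abs_le.mp hx).2]
        · linarith [(abs_le.mp hα).2, (abs_le.mp hβ).1]
      positivity
  have hm1 : (1 : ℝ) ≤ m := by exact_mod_cast Nat.one_le_iff_ne_zero.mpr hm
  have : α ≤ m * α := le_mul_of_one_le_left hα0.le hm1
  linarith [(abs_le.mp h).2]

lemma hasse_int_adj_add_sign {p : ℤ} (hp : p ≠ 0) (n : ℤ) : (hasse ℤ).Adj n (n + p.sign) := by
  rcases hp.lt_or_gt with hp | hp
  · rw [Int.sign_eq_neg_one_of_neg hp, hasse_adj]
    exact Or.inr (by simpa using Order.covBy_add_one (n + -1))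
  · rw [Int.sign_eq_one_of_pos hp, hasse_adj]
    exact Or.inl (Order.covBy_add_one n)

lemma abs_intSign_mul_le (p : ℤ) (c : ℝ) : |(p.sign : ℝ) * c| ≤ |c| := by
  rw [abs_mul]
  refine mul_le_of_le_one_left (abs_nonneg c) ?_
  rcases Int.sign_trichotomy p with h | h | h <;> simp [h]

lemma Int.natAbs_sub_sign_add_one {p : ℤ} (hp : p ≠ 0) : (p - p.sign).natAbs + 1 = p.natAbs := by
  rcases hp.lt_or_gt with hp | hp
  · rw [Int.sign_eq_neg_one_of_neg hp]; omega
  · rw [Int.sign_eq_one_of_pos hp]; omega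

def gridDist (u v : ℤ × ℤ) : ℕ := (v.1 - u.1).natAbs + (v.2 - u.2).natAbs

lemma gridDist_eq_zero {u v : ℤ × ℤ} : gridDist u v = 0 ↔ u = v := by
  simp only [gridDist, Prod.ext_iff]; omega

lemma gridDist_step_fst {u v : ℤ × ℤ} (h : v.1 - u.1 ≠ 0) :
    gridDist (u.1 + (v.1 - u.1).sign, u.2) v + 1 = gridDist u v := by
  have := Int.natAbs_sub_sign_add_one h
  simp only [gridDist, sub_add_eq_sub_sub] at this ⊢; omega

lemma gridDist_step_snd {u v : ℤ × ℤ} (h : v.2 - u.2 ≠ 0) :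
    gridDist (u.1, u.2 + (v.2 - u.2).sign) v + 1 = gridDist u v := by
  have := Int.natAbs_sub_sign_add_one h
  simp only [gridDist, sub_add_eq_sub_sub] at this ⊢; omega

section Strip

variable {a b B : ℝ}

lemma exists_gridAdj_closer_of_abs_le (ha : |a| ≤ B) (hb : |b| ≤ B) {u v : ℤ × ℤ}
    (hu : |u.1 * a + u.2 * b| ≤ B) (hv : |v.1 * a + v.2 * b| ≤ B) (huv : u ≠ v) :
    ∃ u' : ℤ × ℤ, |u'.1 * a + u'.2 * b| ≤ B ∧ (hasse ℤ □ hasse ℤ).Adj u u' ∧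
      gridDist u' v + 1 = gridDist u v := by
  set p := v.1 - u.1
  set q := v.2 - u.2
  have key : (v.1 * a + v.2 * b : ℝ) =
      u.1 * a + u.2 * b + p.natAbs * (p.sign * a) + q.natAbs * (q.sign * b) := by
    have hcast (r : ℤ) : (r : ℝ) = r.natAbs * r.sign := by
      rw [Nat.cast_natAbs, mul_comm]; exact_mod_cast (Int.sign_mul_abs r).symm
    have h1 : (v.1 : ℝ) = u.1 + p := by simp [p]
    have h2 : (v.2 : ℝ) = u.2 + q := by simp [q]
    rw [h1, h2, hcast p, hcast q]; ring
  suffices (p ≠ 0 ∧ |u.1 * a + u.2 * b + p.sign * a| ≤ B) ∨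
      (q ≠ 0 ∧ |u.1 * a + u.2 * b + q.sign * b| ≤ B) by
    rcases this with ⟨hp, h⟩ | ⟨hq, h⟩
    · exact ⟨(u.1 + p.sign, u.2), by push_cast; convert h using 2; ring,
        Or.inl ⟨hasse_int_adj_add_sign hp u.1, rfl⟩, gridDist_step_fst hp⟩
    · exact ⟨(u.1, u.2 + q.sign), by push_cast; convert h using 2; ring,
        Or.inr ⟨hasse_int_adj_add_sign hq u.2, rfl⟩, gridDist_step_snd hq⟩
  have hα := (abs_intSign_mul_le p a).trans ha
  have hβ := (abs_intSign_mul_le q b).trans hb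
  rcases eq_or_ne p 0 with hp | hp
  · have hq : q ≠ 0 := fun hq => huv (Prod.ext (by omega) (by omega))
    rcases abs_add_le_or_of_abs_add_mul_add_mul_le hu hβ hα (Int.natAbs_ne_zero.mpr hq)
      (by rwa [add_right_comm, ← key]) with h | ⟨hk, h⟩
    · exact .inr ⟨hq, h⟩
    · exact .inl ⟨Int.natAbs_ne_zero.mp hk, h⟩
  · rcases abs_add_le_or_of_abs_add_mul_add_mul_le hu hα hβ (Int.natAbs_ne_zero.mpr hp)
      (by rwa [← key]) with h | ⟨hk, h⟩
    · exact .inl ⟨hp, h⟩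
    · exact .inr ⟨Int.natAbs_ne_zero.mp hk, h⟩

theorem reflTransGen_gridAdj_of_abs_le (ha : |a| ≤ B) (hb : |b| ≤ B)
    {u v : ℤ × ℤ} (hu : |u.1 * a + u.2 * b| ≤ B) (hv : |v.1 * a + v.2 * b| ≤ B) :
    ReflTransGen (fun x y : ℤ × ℤ => |x.1 * a + x.2 * b| ≤ B ∧ (hasse ℤ □ hasse ℤ).Adj x y)
      u v := by
  generalize hn : gridDist u v = n
  induction n generalizing u with
  | zero => rw [gridDist_eq_zero.mp hn]
  | succ n ih =>
    have huv : u ≠ v := fun h => by simp [gridDist_eq_zero.mpr h] at hn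
    obtain ⟨u', hu', hadj, hclose⟩ := exists_gridAdj_closer_of_abs_le ha hb hu hv huv
    exact .head ⟨hu, hadj⟩ (ih hu' (by omega))

end Strip

@[simp] lemma perp_apply_zero (w : E2) : perp w 0 = -w 1 := by simp [perp]

@[simp] lemma perp_apply_one (w : E2) : perp w 1 = w 0 := by simp [perp]

@[simp] lemma zvec_apply_zero (u : ℤ × ℤ) : zvec u 0 = u.1 := by simp [zvec, e₁, e₂]

@[simp] lemma zvec_apply_one (u : ℤ × ℤ) : zvec u 1 = u.2 := by simp [zvec, e₁, e₂]

lemma real_inner_eq_coord (x y : E2) : ⟪x, y⟫ = x 0 * y 0 + x 1 * y 1 := by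
  simp [PiLp.inner_apply, Fin.sum_univ_two, mul_comm]

lemma norm_perp (w : E2) : ‖perp w‖ = ‖w‖ := by
  simp [EuclideanSpace.norm_eq, Fin.sum_univ_two, add_comm]

lemma inner_perp_self (w : E2) : ⟪w, perp w⟫ = 0 := by
  rw [real_inner_eq_coord, perp_apply_zero, perp_apply_one]; ring

lemma exists_eq_add_smul_perp_of_inner_eq {w z z₀ : E2} (hw : w ≠ 0) (h : ⟪z, w⟫ = ⟪z₀, w⟫) :
    ∃ t : ℝ, z = z₀ + t • perp w := by
  have hw2 : w 0 ^ 2 + w 1 ^ 2 ≠ 0 := by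
    rw [sq, sq, ← real_inner_eq_coord, real_inner_self_eq_norm_sq]
    exact pow_ne_zero 2 (norm_ne_zero_iff.mpr hw)
  rw [real_inner_eq_coord, real_inner_eq_coord] at h
  refine ⟨((z 1 - z₀ 1) * w 0 - (z 0 - z₀ 0) * w 1) / (w 0 ^ 2 + w 1 ^ 2), ?_⟩
  ext i
  fin_cases i <;>
    simp only [Fin.zero_eta, Fin.mk_one, Fin.isValue, PiLp.add_apply, PiLp.smul_apply,
      perp_apply_zero, perp_apply_one, smul_eq_mul] <;> field_simp
  · linear_combination w 0 * h
  · linear_combination w 1 * h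

lemma zvec_add (u v : ℤ × ℤ) : zvec (u + v) = zvec u + zvec v := by
  simp only [zvec, Prod.fst_add, Prod.snd_add, Int.cast_add, add_smul]; abel

lemma inner_zvec (u : ℤ × ℤ) (x : E2) : ⟪zvec u, x⟫ = u.1 * x 0 + u.2 * x 1 := by
  rw [real_inner_eq_coord, zvec_apply_zero, zvec_apply_one]

lemma exists_norm_sub_zvec_le_one (x : E2) : ∃ u : ℤ × ℤ, ‖x - zvec u‖ ≤ 1 := by
  have hsq (t : ℝ) : (t - round t) ^ 2 ≤ 1 / 4 := by
    nlinarith [abs_sub_round t, sq_abs (t - round t), abs_nonneg (t - round t)]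
  refine ⟨(round (x 0), round (x 1)), ?_⟩
  rw [EuclideanSpace.norm_eq, Real.sqrt_le_one, Fin.sum_univ_two]
  simp only [PiLp.sub_apply, zvec_apply_zero, zvec_apply_one, Real.norm_eq_abs, sq_abs]
  linarith [hsq (x 0), hsq (x 1)]

lemma finite_setOf_dist_zvec_le (x : E2) (R : ℝ) :
    {u : ℤ × ℤ | dist (zvec u) x ≤ R}.Finite := by
  refine ((finite_Icc ⌈x 0 - R⌉ ⌊x 0 + R⌋).prod (finite_Icc ⌈x 1 - R⌉ ⌊x 1 + R⌋)).subset ?_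
  intro u hu
  have h0 := (PiLp.dist_apply_le (zvec u) x 0).trans hu
  have h1 := (PiLp.dist_apply_le (zvec u) x 1).trans hu
  rw [zvec_apply_zero, Real.dist_eq, abs_le] at h0
  rw [zvec_apply_one, Real.dist_eq, abs_le] at h1
  simp only [mem_prod, mem_Icc, Int.ceil_le, Int.le_floor]
  constructor <;> constructor <;> linarith

/-- The lattice points within distance `1` of the line `ℝ w`. -/
def latticeStrip (w : E2) : Set (ℤ × ℤ) := {u | |⟪zvec u, perp w⟫| ≤ ‖w‖}

lemma zero_mem_latticeStrip (w : E2) : (0 : ℤ × ℤ) ∈ latticeStrip w := by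
  simp [latticeStrip, inner_zvec]

lemma reflTransGen_latticeStrip {w : E2} {u v : ℤ × ℤ} (hu : u ∈ latticeStrip w)
    (hv : v ∈ latticeStrip w) :
    ReflTransGen (fun x y => x ∈ latticeStrip w ∧ (hasse ℤ □ hasse ℤ).Adj x y) u v := by
  simp only [latticeStrip, mem_ofPred_eq, inner_zvec] at hu hv ⊢
  exact reflTransGen_gridAdj_of_abs_le (by simpa using PiLp.norm_apply_le w 1)
    (by simpa using PiLp.norm_apply_le w 0) hu hv

lemma exists_mem_latticeStrip_abs_inner_sub_le {w : E2} (hw : w ≠ 0) (r : ℝ) :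
    ∃ u ∈ latticeStrip w, |⟪zvec u, w⟫ - r| ≤ ‖w‖ := by
  obtain ⟨u, hu⟩ := exists_norm_sub_zvec_le_one ((r / ‖w‖ ^ 2) • w)
  set d := zvec u - (r / ‖w‖ ^ 2) • w
  have hd : ‖d‖ ≤ 1 := by rwa [norm_sub_rev]
  have hzu : zvec u = d + (r / ‖w‖ ^ 2) • w := by simp [d]
  refine ⟨u, ?_, ?_⟩
  · rw [latticeStrip, mem_ofPred_eq, hzu, inner_add_left, real_inner_smul_left, inner_perp_self,
      mul_zero, add_zero]
    calc |⟪d, perp w⟫| ≤ ‖d‖ * ‖perp w‖ := abs_real_inner_le_norm _ _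
      _ ≤ ‖w‖ := by rw [norm_perp]; exact mul_le_of_le_one_left (norm_nonneg w) hd
  · rw [hzu, inner_add_left, real_inner_smul_left, real_inner_self_eq_norm_sq,
      div_mul_cancel₀ r (pow_ne_zero 2 (norm_ne_zero_iff.mpr hw)), add_sub_cancel_right]
    exact (abs_real_inner_le_norm _ _).trans (mul_le_of_le_one_left (norm_nonneg w) hd)

lemma inter_line_nonempty_of_isPreconnected {M : Set E2} (hM : IsPreconnected M) {w : E2}
    (hw : w ≠ 0) {c : ℝ} (hslab : ∀ r : ℝ, ∃ z ∈ M, |⟪z, w⟫ - r| ≤ c) (z₀ : E2) :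
    (M ∩ {z : E2 | ∃ t : ℝ, z = z₀ + t • perp w}).Nonempty := by
  obtain ⟨a, ha, hac⟩ := hslab (⟪z₀, w⟫ - c)
  obtain ⟨b, hb, hbc⟩ := hslab (⟪z₀, w⟫ + c)
  have hab : ⟪z₀, w⟫ ∈ Icc ⟪a, w⟫ ⟪b, w⟫ :=
    ⟨by linarith [(abs_le.mp hac).2], by linarith [(abs_le.mp hbc).1]⟩
  obtain ⟨z, hz, hzw⟩ := hM.intermediate_value ha hb
    (continuous_id.inner continuous_const).continuousOn hab
  exact ⟨z, hz, exists_eq_add_smul_perp_of_inner_eq hw hzw⟩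

lemma add_mem_etrans {S : Set E2} {k : E2} (hk : k ∈ S) (v : E2) : k + v ∈ etrans S v :=
  mem_image_of_mem _ hk

lemma zvec_mem_etrans {S : Set E2} (h0 : (0 : E2) ∈ S) (u : ℤ × ℤ) :
    zvec u ∈ etrans S (zvec u) := by
  simpa using add_mem_etrans h0 (zvec u)

lemma abs_inner_le_of_mem_etrans {K : Set E2} (hK : IsBounded K) (h0 : (0 : E2) ∈ K)
    {v z : E2} (hz : z ∈ etrans K v) (x : E2) : |⟪z, x⟫| ≤ diam K * ‖x‖ + |⟪v, x⟫| := by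
  obtain ⟨k, hk, rfl⟩ := hz
  have hk' : ‖k‖ ≤ diam K := by simpa using dist_le_diam_of_mem hK hk h0
  rw [inner_add_left]
  exact (abs_add_le _ _).trans (add_le_add_left ((abs_real_inner_le_norm k x).trans
    (mul_le_mul_of_nonneg_right hk' (norm_nonneg x))) _)

lemma abs_inner_perp_le_of_mem_biUnion_latticeStrip {K : Set E2} (hK : IsBounded K)
    (h0 : (0 : E2) ∈ K) {w z : E2} (hz : z ∈ ⋃ u ∈ latticeStrip w, etrans K (zvec u)) :
    |⟪z, perp w⟫| ≤ (diam K + 1) * ‖w‖ := by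
  obtain ⟨u, hu, hzu⟩ := mem_iUnion₂.mp hz
  have := abs_inner_le_of_mem_etrans hK h0 hzu (perp w)
  rw [norm_perp] at this
  linarith [show |⟪zvec u, perp w⟫| ≤ ‖w‖ from hu]

lemma locallyFinite_etrans_zvec {K : Set E2} (hK : IsBounded K) :
    LocallyFinite fun u : ℤ × ℤ => etrans K (zvec u) := by
  obtain ⟨R, hR⟩ := hK.subset_closedBall 0
  intro x
  refine ⟨ball x 1, ball_mem_nhds x one_pos, (finite_setOf_dist_zvec_le x (R + 1)).subset ?_⟩
  rintro u ⟨_, ⟨k, hk, rfl⟩, hkx⟩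
  have hk' : ‖k‖ ≤ R := by simpa using hR hk
  calc dist (zvec u) x ≤ dist (zvec u) (k + zvec u) + dist (k + zvec u) x := dist_triangle _ _ _
    _ ≤ R + 1 := by
      rw [dist_comm, dist_eq_norm, add_sub_cancel_right]
      exact add_le_add hk' (mem_ball.mp hkx).le

lemma isClosed_biUnion_etrans_zvec {K : Set E2} (hK : IsCompact K) (A : Set (ℤ × ℤ)) :
    IsClosed (⋃ u ∈ A, etrans K (zvec u)) := by
  rw [biUnion_eq_iUnion]
  exact ((locallyFinite_etrans_zvec hK.isBounded).comp_injective
    Subtype.val_injective).isClosed_iUnion fun u => (hK.image (continuous_add_const _)).isClosed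

def cross (KH KV : Set E2) (u : ℤ × ℤ) : Set E2 := etrans KH (zvec u) ∪ etrans KV (zvec u)

section Cross

variable {KH KV : Set E2}

lemma isConnected_cross (hH : IsConnected KH) (hV : IsConnected KV) (h0H : (0 : E2) ∈ KH)
    (h0V : (0 : E2) ∈ KV) (u : ℤ × ℤ) : IsConnected (cross KH KV u) :=
  IsConnected.union ⟨zvec u, zvec_mem_etrans h0H u, zvec_mem_etrans h0V u⟩
    (hH.image _ (continuous_add_const _).continuousOn)
    (hV.image _ (continuous_add_const _).continuousOn)

lemma cross_inter_nonempty_of_adj (h0H : (0 : E2) ∈ KH) (h1H : e₁ ∈ KH) (h1V : e₂ ∈ KV)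
    {u v : ℤ × ℤ} (huv : (hasse ℤ □ hasse ℤ).Adj u v) :
    (cross KH KV u ∩ cross KH KV v).Nonempty := by
  have step {u v d : ℤ × ℤ} (hd : zvec d ∈ KH ∪ KV) (hv : v = u + d) :
      (cross KH KV u ∩ cross KH KV v).Nonempty := by
    refine ⟨zvec v, ?_, Or.inl (zvec_mem_etrans h0H v)⟩
    rw [hv, zvec_add, add_comm]
    exact hd.imp (add_mem_etrans · _) (add_mem_etrans · _)
  have hH : zvec (1, 0) ∈ KH ∪ KV := by simp [zvec, h1H]
  have hV : zvec (0, 1) ∈ KH ∪ KV := by simp [zvec, h1V]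
  simp only [boxProd_adj, hasse_adj, Order.covBy_iff_add_one_eq] at huv
  rcases huv with ⟨h | h, h'⟩ | ⟨h | h, h'⟩
  · exact step hH (Prod.ext (by simp [← h]) (by simp [h']))
  · exact inter_comm _ _ ▸ step hH (Prod.ext (by simp [← h]) (by simp [h']))
  · exact step hV (Prod.ext (by simp [h']) (by simp [← h]))
  · exact inter_comm _ _ ▸ step hV (Prod.ext (by simp [h']) (by simp [← h]))

lemma isConnected_biUnion_cross (hH : IsConnected KH) (hV : IsConnected KV)
    (h0H : (0 : E2) ∈ KH) (h0V : (0 : E2) ∈ KV) (h1H : e₁ ∈ KH) (h1V : e₂ ∈ KV)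
    {S : Set (ℤ × ℤ)} (hS : S.Nonempty)
    (hchain : ∀ u ∈ S, ∀ v ∈ S,
      ReflTransGen (fun x y => x ∈ S ∧ (hasse ℤ □ hasse ℤ).Adj x y) u v) :
    IsConnected (⋃ u ∈ S, cross KH KV u) :=
  IsConnected.biUnion_of_reflTransGen hS (fun u _ => isConnected_cross hH hV h0H h0V u)
    fun u hu v hv => ReflTransGen.mono (fun _ _ ⟨hx, hxy⟩ =>
      ⟨cross_inter_nonempty_of_adj h0H h1H h1V hxy, hx⟩) _ _ (hchain u hu v hv)

end Cross

/-- Lemma 6 of [2]: given continua `K_H ∋ (0,0), (1,0)` and `K_V ∋ (0,0), (0,1)`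
in the plane, for every nonzero vector `w` there is a closed connected set `M`, a union of
integer translates of `K_H` and `K_V`, which meets every straight line orthogonal to `w` and
lies between two straight lines parallel to `w` at distance less than
`3 + 2·max{diam K_H, diam K_V}` from each other. -/
theorem exists_connected_union_of_translates_between_lines
    (KH KV : Set E2)
    (hKHc : IsCompact KH) (hKHconn : IsConnected KH)
    (hKVc : IsCompact KV) (hKVconn : IsConnected KV)
    (h0H : (0 : E2) ∈ KH) (h1H : e₁ ∈ KH)
    (h0V : (0 : E2) ∈ KV) (h1V : e₂ ∈ KV)
    (w : E2) (hw : w ≠ 0) :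
    ∃ M : Set E2, IsClosed M ∧ IsConnected M ∧
      (∃ A B : Set (ℤ × ℤ),
        M = (⋃ u ∈ A, etrans KH (zvec u)) ∪ (⋃ u ∈ B, etrans KV (zvec u))) ∧
      (∀ z₀ : E2, (M ∩ {z : E2 | ∃ t : ℝ, z = z₀ + t • perp w}).Nonempty) ∧
      (∃ c₁ c₂ : ℝ, c₂ - c₁ < 3 + 2 * max (diam KH) (diam KV) ∧
        ∀ z ∈ M, c₁ ≤ ⟪z, ‖w‖⁻¹ • perp w⟫ ∧ ⟪z, ‖w‖⁻¹ • perp w⟫ ≤ c₂) := by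
  set D := max (diam KH) (diam KV)
  set S := latticeStrip w
  set M := (⋃ u ∈ S, etrans KH (zvec u)) ∪ (⋃ u ∈ S, etrans KV (zvec u))
  have hMconn : IsConnected M := by
    rw [show M = ⋃ u ∈ S, cross KH KV u by simp only [M, cross, iUnion_union_distrib]]
    exact isConnected_biUnion_cross hKHconn hKVconn h0H h0V h1H h1V ⟨0, zero_mem_latticeStrip w⟩
      fun u hu v hv => reflTransGen_latticeStrip hu hv
  have hbound (z : E2) (hz : z ∈ M) : |⟪z, perp w⟫| ≤ (D + 1) * ‖w‖ := by
    rcases hz with hz | hz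
    · exact (abs_inner_perp_le_of_mem_biUnion_latticeStrip hKHc.isBounded h0H hz).trans
        (by gcongr; exact le_max_left _ _)
    · exact (abs_inner_perp_le_of_mem_biUnion_latticeStrip hKVc.isBounded h0V hz).trans
        (by gcongr; exact le_max_right _ _)
  refine ⟨M, (isClosed_biUnion_etrans_zvec hKHc S).union (isClosed_biUnion_etrans_zvec hKVc S),
    hMconn, ⟨S, S, rfl⟩, ?_, -(D + 1), D + 1, by linarith, fun z hz => ?_⟩
  · refine inter_line_nonempty_of_isPreconnected hMconn.isPreconnected hw (c := ‖w‖) fun r => ?_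
    obtain ⟨u, hu, hur⟩ := exists_mem_latticeStrip_abs_inner_sub_le hw r
    exact ⟨zvec u, Or.inl (mem_biUnion hu (zvec_mem_etrans h0H u)), hur⟩
  · rw [real_inner_smul_right, ← abs_le, abs_mul, abs_inv, abs_norm,
      inv_mul_le_iff₀ (norm_pos_iff.mpr hw)]
    linarith [hbound z hz]
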